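/- Let |I_m| denote the number of involutions of size m. Then n!·(|I_{n−2}|/(n−2)! − 2·|I_{n−1}|/(n−1)!)/(n·|I_n|) → 1 as n → ∞; equivalently, the n-th Taylor coefficient of x(x−2)·e^{x+x²/2} at 0 is asymptotically equivalent to n·|I_n|/n!. -/

import Mathlib

/-- `ConsecOcc p π i`: the word `π(i) π(i+1) … π(i+r-1)` (positions `0`-indexed)
is order-isomorphic to the pattern word `p 0, …, p (r-1)`. -/
def ConsecOcc {n r : ℕ} (p : Fin r → ℕ) (π : Equiv.Perm (Fin n)) (i : ℕ) : Prop :=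
  ∃ h : i + r ≤ n, ∀ j k : Fin r,
    (π ⟨i + j.val, by have := j.isLt; omega⟩ < π ⟨i + k.val, by have := k.isLt; omega⟩
      ↔ p j < p k)

/-- The number of consecutive occurrences of the pattern `p` in `π`. -/
noncomputable def occCount {n r : ℕ} (p : Fin r → ℕ) (π : Equiv.Perm (Fin n)) : ℕ :=
  Nat.card {i : ℕ // ConsecOcc p π i}

/-- `π` has no consecutive occurrence of any pattern in `ps`. -/
def AvoidsAll {n r : ℕ} (ps : List (Fin r → ℕ)) (π : Equiv.Perm (Fin n)) : Prop :=
  ∀ p ∈ ps, ∀ i, ¬ ConsecOcc p π i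

-- Total number of consecutive occurrences of `p` over all size-`n` permutations satisfying `P`.
open scoped Classical in
noncomputable def totOcc {n r : ℕ} (p : Fin r → ℕ) (P : Equiv.Perm (Fin n) → Prop) : ℕ :=
  ∑ π : Equiv.Perm (Fin n), if P π then occCount p π else 0

/-- The number of size-`n` permutations satisfying `P`. -/
noncomputable def classCard (n : ℕ) (P : Equiv.Perm (Fin n) → Prop) : ℕ :=
  Nat.card {π : Equiv.Perm (Fin n) // P π}

def p123 : Fin 3 → ℕ := ![1,2,3]
def p132 : Fin 3 → ℕ := ![1,3,2]
def p213 : Fin 3 → ℕ := ![2,1,3]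
def p231 : Fin 3 → ℕ := ![2,3,1]
def p312 : Fin 3 → ℕ := ![3,1,2]
def p321 : Fin 3 → ℕ := ![3,2,1]

/-- The number of involutions of `{1,…,n}`. -/
noncomputable def involCard (n : ℕ) : ℕ :=
  Nat.card {π : Equiv.Perm (Fin n) // π * π = 1}


/-!
Write `I = involCard`. Sorting the involutions of `{0, …, n + 1}` by the image of `0` gives
`I (n + 2) = I (n + 1) + (n + 1) * I n`: the involutions fixing `0` are those of the other
`n + 1` points, and those swapping `0` with `b` are those of the remaining `n` points.
With this recurrence the quantity in the theorem equals `1 - 3 * I (n - 1) / I n`.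
The ratio `r n = I (n + 1) / I n` satisfies `r (n + 1) = 1 + (n + 1) / r n`, which keeps it
between `√(n + 1)` and `1 + √(n + 1)`; hence `r n → ∞` and the quantity tends to `1`.
-/

open Equiv Equiv.Perm Filter

section Involutions

variable {α : Type*}

lemma apply_eq_of_mul_self_eq_one {f : Perm α} (hf : f * f = 1) {a b : α} (hab : f a = b) :
    f b = a := by
  rw [← hab, ← Perm.mul_apply, hf, Perm.one_apply]

lemma subtypeCongr_mul_subtypeCongr {p : α → Prop} [DecidablePred p] (ep ep' : Perm {x // p x})
    (en en' : Perm {x // ¬p x}) :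
    ep.subtypeCongr en * ep'.subtypeCongr en' = (ep * ep').subtypeCongr (en * en') :=
  Perm.subtypeCongr.trans ep' ep en' en

variable [DecidableEq α]

lemma apply_mem_pair_iff {f : Perm α} (hf : f * f = 1) {a b : α} (hab : f a = b) (x : α) :
    f x ∈ ({a, b} : Finset α) ↔ x ∈ ({a, b} : Finset α) := by
  have hfa : f x = a ↔ x = b := by
    rw [← apply_eq_of_mul_self_eq_one hf hab]; exact f.injective.eq_iff
  have hfb : f x = b ↔ x = a := by rw [← hab]; exact f.injective.eq_iff
  simp only [Finset.mem_insert, Finset.mem_singleton, hfa, hfb, or_comm]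

/-- An involution sending `a` to `b` is `swap a b` on `{a, b}` (the identity if `a = b`) glued
to an arbitrary involution of the complement. -/
def involutionsApplyEqEquiv (a b : α) :
    {f : Perm α // f * f = 1 ∧ f a = b} ≃
      {h : Perm {x // x ∉ ({a, b} : Finset α)} // h * h = 1} where
  toFun f := ⟨f.1.subtypePerm fun x => not_congr (apply_mem_pair_iff f.2.1 f.2.2 x), by
    rw [subtypePerm_mul]; simp only [f.2.1]; rfl⟩
  invFun h := ⟨((swap a b).subtypePerm
      (apply_mem_pair_iff (swap_mul_self a b) (swap_apply_left a b))).subtypeCongr h.1, by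
    rw [subtypeCongr_mul_subtypeCongr, h.2, subtypePerm_mul]
    simp only [swap_mul_self]
    exact Perm.subtypeCongr.refl, by
    rw [Perm.subtypeCongr.left_apply _ _ (by simp)]; simp⟩
  left_inv f := by
    ext x
    by_cases hx : x ∈ ({a, b} : Finset α)
    · simp only [Perm.subtypeCongr.left_apply _ _ hx, subtypePerm_apply]
      rw [Finset.mem_insert, Finset.mem_singleton] at hx
      rcases hx with rfl | rfl
      · simp [f.2.2]
      · simp [apply_eq_of_mul_self_eq_one f.2.1 f.2.2]
    · simp [Perm.subtypeCongr.right_apply _ _ hx]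
  right_inv h := by
    ext x
    simp [Perm.subtypeCongr.right_apply _ _ x.2]

variable [Fintype α]

lemma card_involutions_eq_involCard :
    Fintype.card {f : Perm α // f * f = 1} = involCard (Fintype.card α) := by
  rw [involCard, Nat.card_eq_fintype_card]
  refine Fintype.card_congr (Equiv.subtypeEquiv (Fintype.equivFin α).permCongrHom.toEquiv
    fun f => ?_)
  rw [MulEquiv.toEquiv_eq_coe, MulEquiv.coe_toEquiv, ← map_mul, MulEquiv.map_eq_one_iff]

lemma card_involutions_eq_sum (a : α) :
    Fintype.card {f : Perm α // f * f = 1} =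
      ∑ b, Fintype.card {f : Perm α // f * f = 1 ∧ f a = b} := by
  simp only [Fintype.card_subtype]
  rw [Finset.card_eq_sum_card_fiberwise (f := fun f : Perm α => f a) (t := Finset.univ)
    (fun _ _ => Finset.mem_coe.2 (Finset.mem_univ _))]
  simp only [Finset.filter_filter]

lemma card_involutions_apply_eq (a b : α) :
    Fintype.card {f : Perm α // f * f = 1 ∧ f a = b} =
      involCard (Fintype.card α - if a = b then 1 else 2) := by
  rw [Fintype.card_congr (involutionsApplyEqEquiv a b), card_involutions_eq_involCard,
    Fintype.card_subtype_compl, Fintype.card_coe]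
  split_ifs with h
  · simp [h]
  · simp [Finset.card_pair h]

end Involutions

lemma involCard_add_two (n : ℕ) :
    involCard (n + 2) = involCard (n + 1) + (n + 1) * involCard n := by
  have h := card_involutions_eq_sum (0 : Fin (n + 2))
  rw [card_involutions_eq_involCard, Fintype.card_fin, Fin.sum_univ_succ] at h
  simpa [card_involutions_apply_eq, (Fin.succ_ne_zero _).symm] using h

lemma involCard_pos (n : ℕ) : 0 < involCard n :=
  have : Nonempty {π : Perm (Fin n) // π * π = 1} := ⟨⟨1, mul_one 1⟩⟩
  Nat.card_pos

section Recurrence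

lemma sqrt_add_one_le_one_add_div {N x : ℝ} (hN : 0 ≤ N) (hx : 0 < x) (hxN : x ≤ 1 + √N) :
    √(N + 1) ≤ 1 + N / x := by
  set s := √N
  have hs : 0 ≤ s := Real.sqrt_nonneg N
  have hN' : s ^ 2 = N := Real.sq_sqrt hN
  calc √(N + 1) ≤ 1 + N / (1 + s) := by
        have h : 1 + s ^ 2 / (1 + s) = (1 + s + s ^ 2) / (1 + s) := by field_simp
        rw [Real.sqrt_le_left (by positivity), ← hN', h, div_pow, le_div_iff₀ (by positivity)]
        -- `(1 + s + s²)² - (s² + 1)(1 + s)² = s²`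
        nlinarith [sq_nonneg s]
    _ ≤ 1 + N / x := by gcongr

lemma one_add_div_le_one_add_sqrt {N x : ℝ} (hN : 0 < N) (hNx : √N ≤ x) :
    1 + N / x ≤ 1 + √(N + 1) := by
  have hs : 0 < √N := Real.sqrt_pos.2 hN
  calc 1 + N / x ≤ 1 + N / √N := by gcongr
    _ = 1 + √N := by rw [Real.div_sqrt]
    _ ≤ 1 + √(N + 1) := by gcongr; linarith

theorem sqrt_le_and_le_one_add_sqrt_of_recurrence {r : ℕ → ℝ} (h0 : r 0 = 1)
    (hr : ∀ n : ℕ, r (n + 1) = 1 + (n + 1) / r n) (n : ℕ) :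
    √(n + 1) ≤ r n ∧ r n ≤ 1 + √(n + 1) := by
  induction n with
  | zero => simp [h0]
  | succ n ih =>
    rw [hr]
    push_cast
    have hpos : 0 < r n := lt_of_lt_of_le (by positivity) ih.1
    exact ⟨sqrt_add_one_le_one_add_div (by positivity) hpos ih.2,
      one_add_div_le_one_add_sqrt (by positivity) ih.1⟩

end Recurrence

noncomputable def involRatio (n : ℕ) : ℝ := involCard (n + 1) / involCard n

lemma involRatio_zero : involRatio 0 = 1 := by
  have h₀ : involCard 0 = 1 := by rw [involCard, Nat.card_eq_fintype_card]; decide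
  have h₁ : involCard 1 = 1 := by rw [involCard, Nat.card_eq_fintype_card]; decide
  simp [involRatio, h₀, h₁]

lemma involRatio_succ (n : ℕ) : involRatio (n + 1) = 1 + (n + 1) / involRatio n := by
  have h₀ : (involCard n : ℝ) ≠ 0 := by exact_mod_cast (involCard_pos n).ne'
  have h₁ : (involCard (n + 1) : ℝ) ≠ 0 := by exact_mod_cast (involCard_pos (n + 1)).ne'
  rw [involRatio, involRatio, involCard_add_two]
  field_simp
  push_cast
  ring

lemma tendsto_involRatio_atTop : Tendsto involRatio atTop atTop := by
  refine tendsto_atTop_mono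
    (fun n => (sqrt_le_and_le_one_add_sqrt_of_recurrence involRatio_zero involRatio_succ n).1) ?_
  exact Real.tendsto_sqrt_atTop.comp (tendsto_natCast_atTop_atTop.atTop_add tendsto_const_nhds)

lemma factorial_mul_involCard_sub_div_eq (m : ℕ) :
    ((m + 2).factorial : ℝ) *
        ((involCard m : ℝ) / m.factorial - 2 * (involCard (m + 1) : ℝ) / (m + 1).factorial)
        / ((m + 2 : ℕ) * involCard (m + 2)) = 1 - 3 / involRatio (m + 1) := by
  have h₀ : (involCard (m + 1) : ℝ) ≠ 0 := by exact_mod_cast (involCard_pos (m + 1)).ne'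
  have h₁ : (involCard (m + 2) : ℝ) ≠ 0 := by exact_mod_cast (involCard_pos (m + 2)).ne'
  rw [involRatio, Nat.factorial_succ (m + 1), Nat.factorial_succ m]
  rw [involCard_add_two] at h₁ ⊢
  push_cast at h₁ ⊢
  field_simp
  ring

theorem stmt16 :
    Filter.Tendsto (fun n : ℕ =>
        (Nat.factorial n : ℝ) *
          ((involCard (n - 2) : ℝ) / Nat.factorial (n - 2)
            - 2 * (involCard (n - 1) : ℝ) / Nat.factorial (n - 1))
          / (n * involCard n))
      Filter.atTop (nhds 1) := by
  rw [← tendsto_add_atTop_iff_nat 2]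
  have h : Tendsto (fun m : ℕ => 1 - 3 / involRatio (m + 1)) atTop (nhds 1) := by
    simpa using tendsto_const_nhds.sub (tendsto_const_nhds.div_atTop
      (tendsto_involRatio_atTop.comp (tendsto_add_atTop_nat 1)))
  exact h.congr fun m => by simpa using (factorial_mul_involCard_sub_div_eq m).symm
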